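/- arXiv:2406.18468 — 2 statements merged into one kernel-verified Lean document; each statement's English description precedes it below -/
import Mathlib

section
/- Let {(Ω_i, F_i, μ_i), T_{i,j}} be a simply maximal projective system of probability spaces over a directed set I. If there exists a probability space (N, N', ν) and surjective measure-preserving maps S_i : N → Ω_i with T_{i,j} ∘ S_j = S_i for all i ≤ j, then the finitely additive set function μ defined on the field F₀ = ⋃_i T_i^{-1}(F_i) of the thread space by μ(T_i^{-1}(A)) = μ_i(A) is σ-additive, hence extends uniquely to a probability measure on σ(F₀). -/
open MeasureTheory

/-- Let `{(Ω_i, F_i, μ_i), T_{i,j}}` be a simply maximal projective system of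
probability spaces over a directed set.  If there exists a probability space `(N, ν)` and
surjective measure-preserving maps `S_i : N → Ω_i` with `T_{i,j} ∘ S_j = S_i` for `i ≤ j`,
then the finitely additive set function `μ(T_i⁻¹(A)) = μ_i(A)` on the field
`F₀ = ⋃_i T_i⁻¹(F_i)` of the thread space is σ-additive, i.e. it extends (uniquely) to a
probability measure on `σ(F₀) = ⨆_i T_i⁻¹(F_i)`. -/
theorem projective_limit_exists_of_upper_bound {ι : Type*} [Preorder ι]
    [IsDirected ι (· ≤ ·)]
    (Ωi : ι → Type*) [∀ i, MeasurableSpace (Ωi i)]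
    (μi : ∀ i, Measure (Ωi i)) [∀ i, IsProbabilityMeasure (μi i)]
    (Tij : ∀ i j : ι, i ≤ j → Ωi j → Ωi i)
    (hMP : ∀ i j (h : i ≤ j), MeasurePreserving (Tij i j h) (μi j) (μi i))
    (hcomp : ∀ i j k (hij : i ≤ j) (hjk : j ≤ k),
      Tij i j hij ∘ Tij j k hjk = Tij i k (hij.trans hjk))
    (hid : ∀ i, Tij i i le_rfl = id)
    -- simple maximality of the thread space
    (hne : Nonempty {ω : ∀ i, Ωi i // ∀ i j (h : i ≤ j), ω i = Tij i j h (ω j)})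
    (hsurj : ∀ i, Function.Surjective
      (fun ω : {ω : ∀ i, Ωi i // ∀ i j (h : i ≤ j), ω i = Tij i j h (ω j)} => ω.1 i))
    -- an upper bound `(N, ν)` with compatible surjective measure-preserving maps
    (N : Type*) [MeasurableSpace N] (ν : Measure N) [IsProbabilityMeasure ν]
    (Si : ∀ i, N → Ωi i)
    (hSMP : ∀ i, MeasurePreserving (Si i) ν (μi i))
    (hSsurj : ∀ i, Function.Surjective (Si i))
    (hScomp : ∀ i j (h : i ≤ j), Tij i j h ∘ Si j = Si i) :
    -- then on the thread space, with the σ-algebra `σ(F₀) = ⨆_i T_i⁻¹(F_i)`, there is a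
    -- unique probability measure extending the canonical finitely additive set function
    ∃! μ : @Measure {ω : ∀ i, Ωi i // ∀ i j (h : i ≤ j), ω i = Tij i j h (ω j)}
        (⨆ i, MeasurableSpace.comap (fun ω => ω.1 i) inferInstance),
      @IsProbabilityMeasure _ _ μ ∧
      ∀ i (A : Set (Ωi i)), MeasurableSet A → μ ((fun ω => ω.1 i) ⁻¹' A) = μi i A := by

  classical
  letI Ω := {ω : ∀ i, Ωi i // ∀ i j (h : i ≤ j), ω i = Tij i j h (ω j)}
  letI mΩ : MeasurableSpace Ω :=
    ⨆ i, MeasurableSpace.comap (fun ω : Ω => ω.1 i) inferInstance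
  have hcoord : ∀ i, @Measurable Ω _ mΩ _ (fun ω : Ω => ω.1 i) := fun i =>
    MeasurableSpace.comap_le_iff_le_map.mp (le_iSup
      (fun i => MeasurableSpace.comap (fun ω : Ω => ω.1 i) inferInstance) i)
  -- the map from N to the thread space
  let Φ : N → Ω := fun n => ⟨fun i => Si i n, fun i j h => (congrFun (hScomp i j h) n).symm⟩
  have hΦ : @Measurable N Ω _ mΩ Φ := by
    rw [measurable_iff_comap_le]
    rw [MeasurableSpace.comap_iSup]
    exact iSup_le fun i => by
      rw [MeasurableSpace.comap_comp]
      exact measurable_iff_comap_le.mp (hSMP i).measurable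
  -- the candidate measure
  let μ : @Measure Ω mΩ := @Measure.map N Ω _ mΩ Φ ν
  haveI hμP : @IsProbabilityMeasure Ω mΩ μ := Measure.isProbabilityMeasure_map hΦ.aemeasurable
  have hμ : ∀ i (A : Set (Ωi i)), MeasurableSet A →
      μ ((fun ω : Ω => ω.1 i) ⁻¹' A) = μi i A := by
    intro i A hA
    rw [Measure.map_apply hΦ ((hcoord i) hA)]
    exact (hSMP i).measure_preimage hA.nullMeasurableSet
  -- the generating π-system
  set S : Set (Set Ω) := {s | ∃ i, ∃ A : Set (Ωi i), MeasurableSet A ∧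
    s = (fun ω : Ω => ω.1 i) ⁻¹' A} with hS
  have hcoordpre : ∀ (i k : ι) (h : i ≤ k) (A : Set (Ωi i)),
      (fun ω : Ω => ω.1 i) ⁻¹' A = (fun ω : Ω => ω.1 k) ⁻¹' (Tij i k h ⁻¹' A) := by
    intro i k h A
    ext ω
    simp only [Set.mem_preimage, ω.2 i k h]
  have hpi : IsPiSystem S := by
    rintro s ⟨i, A, hA, rfl⟩ t ⟨j, B, hB, rfl⟩ -
    obtain ⟨k, hik, hjk⟩ := directed_of (· ≤ ·) i j
    refine ⟨k, Tij i k hik ⁻¹' A ∩ Tij j k hjk ⁻¹' B,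
      ((hMP i k hik).measurable hA).inter ((hMP j k hjk).measurable hB), ?_⟩
    rw [hcoordpre i k hik A, hcoordpre j k hjk B, Set.preimage_inter]
  have hgen : mΩ = MeasurableSpace.generateFrom S := by
    refine le_antisymm (iSup_le fun i => ?_) (MeasurableSpace.generateFrom_le ?_)
    · rintro s ⟨A, hA, rfl⟩
      exact MeasurableSpace.measurableSet_generateFrom ⟨i, A, hA, rfl⟩
    · rintro s ⟨i, A, hA, rfl⟩
      exact (hcoord i) hA
  refine ⟨μ, ⟨hμP, hμ⟩, ?_⟩
  rintro μ' ⟨hP', hμ'⟩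
  haveI := hP'
  refine @ext_of_generate_finite Ω mΩ μ' μ S hgen hpi _ ?_ ?_
  · rintro s ⟨i, A, hA, rfl⟩
    rw [hμ' i A hA, hμ i A hA]
  · rw [@measure_univ Ω mΩ μ' hP', @measure_univ Ω mΩ μ hμP]
end

section
/- Every K-convergent convolution system is convergent: if the projective system {(Ω_I, μ_I), X_{I,J}} over all finite subsets with at least two elements admits a projective limit (Ω♭, P♭), then for each s < t the projective system {(Ω_I, μ_I), T_{I,J}} over partitions of [s,t] is convergent, since composing each canonical projection X_I with the inclusion of partition-indexed data yields an upper bound, making the corresponding finitely additive set function σ-additive. -/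
open MeasureTheory

/-- `I` is a finite partition of the interval `[s,t]`. -/
def IsPart {𝕊 : Type} [LinearOrder 𝕊] (s t : 𝕊) (I : Finset 𝕊) : Prop :=
  ↑I ⊆ Set.Icc s t ∧ s ∈ I ∧ t ∈ I

/-- `J` refines `I` within the same interval. -/
def SameSpan {𝕊 : Type} [LinearOrder 𝕊] (I J : Finset 𝕊) : Prop :=
  I ⊆ J ∧ I.min = J.min ∧ I.max = J.max

/-- Every `K`-convergent convolution system is convergent.  If the projective
system `{(Ω_I, μ_I), X_{I,J}}` over all finite subsets with at least two elements admits a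
projective limit `(Ω♭, P♭)` (given by its canonical measure-preserving surjective
projections `X_I`, compatible with the connecting maps), then for every `s < t` the
projective system `{(Ω_I, μ_I), T_{I,J}}` over the partitions of `[s,t]` is convergent:
the canonical finitely additive set function on the cylinder sets of its thread space is
σ-additive, i.e. there is a probability measure `μ` on the thread space with
`μ(T_I⁻¹(A)) = μ_I(A)`. -/
theorem Kconvergent_implies_convergent {𝕊 : Type} [LinearOrder 𝕊]
    (ΩI : Finset 𝕊 → Type) [∀ I, MeasurableSpace (ΩI I)]
    (μI : ∀ I, Measure (ΩI I))
    (hprob : ∀ I : Finset 𝕊, 2 ≤ I.card → IsProbabilityMeasure (μI I))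
    (TIJ : ∀ I J : Finset 𝕊, ΩI J → ΩI I)
    (hTid : ∀ I, TIJ I I = id)
    (hTMP : ∀ I J : Finset 𝕊, 2 ≤ I.card → SameSpan I J →
      MeasurePreserving (TIJ I J) (μI J) (μI I))
    (hTcoc : ∀ I J K : Finset 𝕊, SameSpan I J → SameSpan J K →
      TIJ I K = TIJ I J ∘ TIJ J K)
    -- the projective limit `(Ω♭, P♭)` of the extended system, via its projections `X_I`
    (Ωb : Type) [MeasurableSpace Ωb] (Pb : Measure Ωb) [IsProbabilityMeasure Pb]
    (X : ∀ I : Finset 𝕊, Ωb → ΩI I)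
    (hXMP : ∀ I : Finset 𝕊, 2 ≤ I.card → MeasurePreserving (X I) Pb (μI I))
    (hXsurj : ∀ I : Finset 𝕊, 2 ≤ I.card → Function.Surjective (X I))
    (hXcomp : ∀ I J : Finset 𝕊, 2 ≤ I.card → SameSpan I J → X I = TIJ I J ∘ X J) :
    -- then for each `s < t` the partition system over `[s,t]` is convergent
    ∀ s t : 𝕊, s < t →
      ∃ μ : @Measure
          {ω : ∀ I : {I : Finset 𝕊 // IsPart s t I}, ΩI I.1 //
            ∀ I J (_ : I.1 ⊆ J.1), ω I = TIJ I.1 J.1 (ω J)}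
          (⨆ I, MeasurableSpace.comap (fun ω => ω.1 I) inferInstance),
        @IsProbabilityMeasure _ _ μ ∧
        ∀ (I : {I : Finset 𝕊 // IsPart s t I}) (A : Set (ΩI I.1)), MeasurableSet A →
          μ ((fun ω => ω.1 I) ⁻¹' A) = μI I.1 A := by
  intro s t hst
  -- basic facts about partitions
  have hcard : ∀ I : Finset 𝕊, IsPart s t I → 2 ≤ I.card := by
    intro I hI
    have hsub : ({s, t} : Finset 𝕊) ⊆ I := by
      intro x hx
      rcases Finset.mem_insert.mp hx with rfl | hx
      · exact hI.2.1
      · rcases Finset.mem_singleton.mp hx with rfl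
        exact hI.2.2
    calc 2 = ({s, t} : Finset 𝕊).card := by
            rw [Finset.card_insert_of_notMem (by simp [hst.ne]), Finset.card_singleton]
      _ ≤ I.card := Finset.card_le_card hsub
  have hspan : ∀ I J : Finset 𝕊, IsPart s t I → IsPart s t J → I ⊆ J → SameSpan I J := by
    intro I J hI hJ hIJ
    have hmin : ∀ K : Finset 𝕊, IsPart s t K → K.min = (s : WithTop 𝕊) := by
      intro K hK
      apply le_antisymm
      · exact Finset.min_le hK.2.1
      · apply Finset.le_min
        intro b hb
        exact_mod_cast (hK.1 hb).1
    have hmax : ∀ K : Finset 𝕊, IsPart s t K → K.max = (t : WithBot 𝕊) := by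
      intro K hK
      apply le_antisymm
      · apply Finset.max_le
        intro b hb
        exact_mod_cast (hK.1 hb).2
      · exact Finset.le_max hK.2.2
    exact ⟨hIJ, (hmin I hI).trans (hmin J hJ).symm, (hmax I hI).trans (hmax J hJ).symm⟩
  -- the map from Ωb into the thread space
  set Θ := {ω : ∀ I : {I : Finset 𝕊 // IsPart s t I}, ΩI I.1 //
      ∀ I J (_ : I.1 ⊆ J.1), ω I = TIJ I.1 J.1 (ω J)} with hΘ
  letI mΘ : MeasurableSpace Θ := ⨆ I, MeasurableSpace.comap (fun ω : Θ => ω.1 I) inferInstance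
  have hthread : ∀ ω : Ωb, ∀ I J : {I : Finset 𝕊 // IsPart s t I}, I.1 ⊆ J.1 →
      X I.1 ω = TIJ I.1 J.1 (X J.1 ω) := by
    intro ω I J hIJ
    have := hXcomp I.1 J.1 (hcard I.1 I.2) (hspan I.1 J.1 I.2 J.2 hIJ)
    exact congrFun this ω
  let f : Ωb → Θ := fun ω => ⟨fun I => X I.1 ω, fun I J h => hthread ω I J h⟩
  have hcoordmeas : ∀ I : {I : Finset 𝕊 // IsPart s t I},
      Measurable (fun ω : Θ => ω.1 I) := by
    intro I
    exact Measurable.of_comap_le (le_iSup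
      (fun I : {I : Finset 𝕊 // IsPart s t I} =>
        MeasurableSpace.comap (fun ω : Θ => ω.1 I) inferInstance) I)
  have hfmeas : Measurable f := by
    rw [measurable_iff_le_map]
    apply iSup_le
    intro I
    rw [MeasurableSpace.comap_le_iff_le_map, MeasurableSpace.map_comp]
    exact measurable_iff_le_map.mp (hXMP I.1 (hcard I.1 I.2)).measurable
  refine ⟨Pb.map f, ?_, ?_⟩
  · exact Measure.isProbabilityMeasure_map hfmeas.aemeasurable
  · intro I A hA
    rw [Measure.map_apply hfmeas (hcoordmeas I hA)]
    have : f ⁻¹' ((fun ω : Θ => ω.1 I) ⁻¹' A) = X I.1 ⁻¹' A := rfl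
    rw [this, (hXMP I.1 (hcard I.1 I.2)).measure_preimage hA.nullMeasurableSet]
end
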